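/- arXiv:2202.00643 — 4 statements merged into one kernel-verified Lean document; each statement's English description precedes it below -/
import Mathlib

section
/- For every right-infinite word u over a finite alphabet, there exists a uniformly recurrent right-infinite word v with Fac(v) ⊆ Fac(u). -/
/-- The factor of `w` of length `n` starting at position `i`. -/
def factorAt {A : Type*} (w : ℕ → A) (i n : ℕ) : List A :=
  (List.range n).map (fun k => w (i + k))

/-- `u` is a (finite, contiguous) factor of the right-infinite word `w`. -/
def IsFactorOf {A : Type*} (u : List A) (w : ℕ → A) : Prop :=
  ∃ i, u = factorAt w i u.length

/-- The set of factors of `w`. -/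
def Fac {A : Type*} (w : ℕ → A) : Set (List A) := {u | IsFactorOf u w}

/-- `w` is recurrent: every factor occurs at arbitrarily large positions. -/
def Recurrent {A : Type*} (w : ℕ → A) : Prop :=
  ∀ u ∈ Fac w, ∀ N : ℕ, ∃ i ≥ N, u = factorAt w i u.length

/-- `w` is uniformly recurrent: each factor occurs in every sufficiently long factor. -/
def UniformlyRecurrent {A : Type*} (w : ℕ → A) : Prop :=
  ∀ u ∈ Fac w, ∃ N : ℕ, ∀ y ∈ Fac w, y.length = N → u <:+: y

/-- `w` is (purely) periodic. -/
def PeriodicWord {A : Type*} (w : ℕ → A) : Prop :=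
  ∃ p ≥ 1, ∀ n, w (n + p) = w n

/-- `w` is eventually periodic. -/
def EventuallyPeriodicWord {A : Type*} (w : ℕ → A) : Prop :=
  ∃ p ≥ 1, ∃ N, ∀ n ≥ N, w (n + p) = w n

/-- The factor complexity function of `w`. -/
noncomputable def cplx {A : Type*} (w : ℕ → A) (n : ℕ) : ℕ :=
  Set.ncard {u | u ∈ Fac w ∧ u.length = n}

/-- A set of finite words is factor-closed. -/
def FactorClosed {A : Type*} (S : Set (List A)) : Prop :=
  ∀ y ∈ S, ∀ u, u <:+: y → u ∈ S

/-- The radical of `w`. -/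
def Rad {A : Type*} (w : ℕ → A) : Set (List A) :=
  {z | z ∈ Fac w ∧ ∀ Y : Finset (List A),
    (∀ y ∈ Y, y ∈ Fac w ∧ z <:+: y) →
    ∃ N : ℕ, ∀ L : List (List A), L.length = N → (∀ y ∈ L, y ∈ Y) →
      L.flatten ∉ Fac w}

/-- The recurrent spectrum of `w`, with classes identified with their factor sets. -/
def RecSpec {A : Type*} (w : ℕ → A) : Set (Set (List A)) :=
  {F | ∃ v : ℕ → A, Recurrent v ∧ F = Fac v ∧ Fac v ⊆ Fac w}

section FurstenbergAux

variable {A : Type*}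

@[simp] lemma factorAt_length (w : ℕ → A) (i n : ℕ) : (factorAt w i n).length = n := by
  simp [factorAt]

lemma factorAt_add (w : ℕ → A) (i a b : ℕ) :
    factorAt w i (a + b) = factorAt w i a ++ factorAt w (i + a) b := by
  simp only [factorAt, List.range_add, List.map_append, List.map_map]
  congr 1
  apply List.map_congr_left
  intro k _
  simp [Function.comp]
  ring_nf

lemma factorAt_infix (w : ℕ → A) {i j n m : ℕ} (h1 : j ≤ i) (h2 : i + n ≤ j + m) :
    factorAt w i n <:+: factorAt w j m := by
  obtain ⟨a, rfl⟩ := Nat.exists_eq_add_of_le h1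
  obtain ⟨b, rfl⟩ : ∃ b, m = a + (n + b) := ⟨m - a - n, by omega⟩
  refine ⟨factorAt w j a, factorAt w (j + a + n) b, ?_⟩
  rw [factorAt_add, factorAt_add, List.append_assoc]

lemma factorAt_mem_Fac (w : ℕ → A) (i n : ℕ) : factorAt w i n ∈ Fac w :=
  ⟨i, by rw [factorAt_length]⟩

/-- The shift map. -/
def shiftMap : (ℕ → A) → (ℕ → A) := fun w n => w (n + 1)

lemma shiftMap_iterate (j : ℕ) (w : ℕ → A) (n : ℕ) : (shiftMap^[j] w) n = w (n + j) := by
  induction j generalizing w n with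
  | zero => rfl
  | succ j ih =>
    rw [Function.iterate_succ_apply, ih]
    simp [shiftMap]
    ring_nf

lemma factorAt_shift (j : ℕ) (w : ℕ → A) (i n : ℕ) :
    factorAt (shiftMap^[j] w) i n = factorAt w (j + i) n := by
  simp only [factorAt]
  apply List.map_congr_left
  intro k _
  rw [shiftMap_iterate]
  ring_nf

lemma mem_cylinder_iff (w : ℕ → A) (z : List A) (i : ℕ) :
    z = factorAt w i z.length ↔ ∀ k : Fin z.length, w (i + k) = z.get k := by
  constructor
  · intro h k
    have hk : (k : ℕ) < z.length := k.2
    have h2 := List.getElem_of_eq h hk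
    simp only [factorAt, List.getElem_map, List.getElem_range] at h2
    simp [List.get_eq_getElem, h2]
  · intro h
    apply List.ext_get (by simp)
    intro k hk _
    have := h ⟨k, hk⟩
    simp only [factorAt, List.get_eq_getElem, List.getElem_map, List.getElem_range] at this ⊢
    exact this.symm

end FurstenbergAux

theorem furstenberg_exists_uniformlyRecurrent {A : Type*} [Finite A] (u : ℕ → A) :
    ∃ v : ℕ → A, UniformlyRecurrent v ∧ Fac v ⊆ Fac u := by
  classical
  letI : TopologicalSpace A := ⊥
  haveI : DiscreteTopology A := ⟨rfl⟩
  haveI : Nonempty A := ⟨u 0⟩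
  -- cylinders
  set T : (ℕ → A) → (ℕ → A) := shiftMap with hT
  have hTcont : Continuous T := continuous_pi fun n => continuous_apply (n + 1)
  let C : List A → ℕ → Set (ℕ → A) := fun z i => {w | z = factorAt w i z.length}
  have hCeq : ∀ z i, C z i = ⋂ k : Fin z.length, (fun w : ℕ → A => w (i + k)) ⁻¹' {z.get k} := by
    intro z i
    ext w
    simp only [Set.mem_iInter, Set.mem_preimage, Set.mem_singleton_iff]
    exact mem_cylinder_iff w z i
  have hCopen : ∀ z i, IsOpen (C z i) := by
    intro z i
    rw [hCeq]
    exact isOpen_iInter_of_finite fun k =>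
      (continuous_apply (i + (k : ℕ))).isOpen_preimage _ (isOpen_discrete _)
  have hCclosed : ∀ z i, IsClosed (C z i) := by
    intro z i
    rw [hCeq]
    exact isClosed_iInter fun k =>
      IsClosed.preimage (continuous_apply (i + (k : ℕ))) (isClosed_singleton)
  -- orbit closure
  let O : Set (ℕ → A) := Set.range (fun n => T^[n] u)
  let Y : Set (ℕ → A) := closure O
  have hYFac : ∀ w ∈ Y, Fac w ⊆ Fac u := by
    intro w hw z hz
    obtain ⟨i, hi⟩ := hz
    have hmem : w ∈ C z i := hi
    obtain ⟨x, hxC, hxO⟩ :=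
      mem_closure_iff.mp hw (C z i) (hCopen z i) hmem
    obtain ⟨m, rfl⟩ := hxO
    refine ⟨m + i, ?_⟩
    have h2 : z = factorAt (shiftMap^[m] u) i z.length := hxC
    rwa [factorAt_shift] at h2
  -- the family for Zorn
  let S : Set (Set (ℕ → A)) :=
    {M | M.Nonempty ∧ IsClosed M ∧ T '' M ⊆ M ∧ M ⊆ Y}
  have hYS : Y ∈ S := by
    refine ⟨⟨u, subset_closure ⟨0, rfl⟩⟩, isClosed_closure, ?_, subset_rfl⟩
    refine (image_closure_subset_closure_image hTcont (s := O)).trans ?_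
    refine (closure_mono ?_).trans subset_rfl
    rintro x ⟨y, ⟨n, rfl⟩, rfl⟩
    exact ⟨n + 1, Function.iterate_succ_apply' T n u⟩
  have hchaincond : ∀ c ⊆ S, IsChain (· ⊆ ·) c → c.Nonempty →
      ∃ lb ∈ S, ∀ s ∈ c, lb ⊆ s := by
    intro c hcS hchain hcne
    haveI : Nonempty c := hcne.to_subtype
    refine ⟨⋂₀ c, ?_, fun s hs => Set.sInter_subset_of_mem hs⟩
    have hne : (⋂₀ c).Nonempty := by
      rw [Set.sInter_eq_iInter]
      apply IsCompact.nonempty_iInter_of_directed_nonempty_isCompact_isClosed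
      · rintro ⟨s, hs⟩ ⟨t, ht⟩
        rcases hchain.total hs ht with h | h
        · exact ⟨⟨s, hs⟩, subset_rfl, h⟩
        · exact ⟨⟨t, ht⟩, h, subset_rfl⟩
      · exact fun s => (hcS s.2).1
      · exact fun s => (hcS s.2).2.1.isCompact
      · exact fun s => (hcS s.2).2.1
    refine ⟨hne, isClosed_sInter fun s hs => (hcS hs).2.1, ?_, ?_⟩
    · rintro x ⟨y, hy, rfl⟩ s hs
      exact (hcS hs).2.2.1 ⟨y, hy s hs, rfl⟩
    · obtain ⟨s, hs⟩ := hcne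
      exact (Set.sInter_subset_of_mem hs).trans (hcS hs).2.2.2
  obtain ⟨M, hMY, hMmin⟩ := zorn_superset_nonempty S hchaincond Y hYS
  obtain ⟨hMne, hMclosed, hMinv, hMsubY⟩ := hMmin.1
  obtain ⟨v, hv⟩ := hMne
  have hMiter : ∀ j, ∀ w ∈ M, T^[j] w ∈ M := by
    intro j
    induction j with
    | zero => exact fun w hw => hw
    | succ j ih =>
      intro w hw
      rw [Function.iterate_succ_apply']
      exact hMinv ⟨_, ih w hw, rfl⟩
  refine ⟨v, ?_, (hYFac v (hMsubY hv))⟩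
  -- uniform recurrence
  intro z hz
  -- step 1: z occurs in every element of M
  have hocc : ∀ w ∈ M, ∃ i, z = factorAt w i z.length := by
    by_contra hcon
    push_neg at hcon
    obtain ⟨w₀, hw₀M, hw₀⟩ := hcon
    set M' : Set (ℕ → A) := M ∩ ⋂ i, (C z i)ᶜ with hM'
    have hM'S : M' ∈ S := by
      refine ⟨⟨w₀, hw₀M, ?_⟩, ?_, ?_, Set.inter_subset_left.trans hMsubY⟩
      · simp only [Set.mem_iInter, Set.mem_compl_iff]
        exact fun i h => hw₀ i h
      · exact hMclosed.inter (isClosed_iInter fun i => (hCopen z i).isClosed_compl)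
      · rintro x ⟨y, ⟨hyM, hyC⟩, rfl⟩
        refine ⟨hMinv ⟨y, hyM, rfl⟩, ?_⟩
        simp only [Set.mem_iInter, Set.mem_compl_iff] at hyC ⊢
        intro i h
        have h2 : z = factorAt (shiftMap^[1] y) i z.length := h
        rw [factorAt_shift] at h2
        exact hyC (1 + i) h2
    have hMeq : M ⊆ M' := hMmin.2 hM'S Set.inter_subset_left
    have hvM' := hMeq hv
    obtain ⟨i, hi⟩ := hz
    have := hvM'.2
    simp only [Set.mem_iInter, Set.mem_compl_iff] at this
    exact this i hi
  -- step 2: compactness gives a uniform bound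
  have hcover : M ⊆ ⋃ i : ℕ, C z i := by
    intro w hw
    obtain ⟨i, hi⟩ := hocc w hw
    exact Set.mem_iUnion.mpr ⟨i, hi⟩
  obtain ⟨F, hF⟩ := hMclosed.isCompact.elim_finite_subcover (C z ·) (fun i => hCopen z i) hcover
  refine ⟨F.sup id + z.length, ?_⟩
  intro y hy hylen
  obtain ⟨j, hj⟩ := hy
  have hTjv : T^[j] v ∈ M := hMiter j v hv
  obtain ⟨i, hiF, hiC⟩ := Set.mem_iUnion₂.mp (hF hTjv)
  have hiC' : z = factorAt v (j + i) z.length := by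
    have : z = factorAt (T^[j] v) i z.length := hiC
    rwa [factorAt_shift] at this
  have hiN : i ≤ F.sup id := Finset.le_sup (f := id) hiF
  rw [hj, hylen, hiC', factorAt_length]
  exact factorAt_infix v (Nat.le_add_right j i) (by omega)
end

section
/- Let w = x y x² y x⁴ y x⁸ y x¹⁶ y ⋯ over the alphabet {x, y}, where the block of x's before the (k+1)-st occurrence of y has length 2^k (with the first block having length 1). Then a factor z of w lies in Rad(w) if and only if z contains the letter y. -/
/-! Encode `x = 0` and `y = 1`. The letters `y` sit at the positions `2 ^ (k + 1) + k - 1`, so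
the gaps between them double and a factor containing `c` letters `y` has length at least
`2 ^ c - 1`. A product of `N` factors that each contain `y` has length linear in `N` but contains
`N` letters `y`, so it is not a factor once `N` is large. A factor without `y` is a power of `x`,
and all its powers occur inside the ever longer blocks of `x`. -/

lemma exists_mul_add_one_lt_two_pow (M : ℕ) : ∃ N, N * M + 1 < 2 ^ N := by
  have h : 2 * M + 2 < 2 ^ (2 * M + 2) := Nat.lt_two_pow_self
  refine ⟨(2 * M + 2) + (2 * M + 2), ?_⟩
  rw [pow_add]
  nlinarith

section Words

variable {A : Type*} {w : ℕ → A}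

lemma replicate_mem_Fac {a : A} {i m : ℕ} (h : ∀ j < m, w (i + j) = a) :
    List.replicate m a ∈ Fac w :=
  ⟨i, List.ext_getElem (by simp [factorAt]) fun j hj _ => by
    rw [List.length_replicate] at hj
    simp [factorAt, h j hj]⟩

lemma count_factorAt [DecidableEq A] (a : A) (i ℓ : ℕ) :
    (factorAt w i ℓ).count a = ((Finset.range ℓ).filter (fun j => w (i + j) = a)).card := by
  induction ℓ with
  | zero => simp [factorAt]
  | succ ℓ ih =>
    rw [factorAt, List.range_succ, List.map_append, List.count_append, ← factorAt, ih,
      Finset.range_add_one, Finset.filter_insert]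
    by_cases h : w (i + ℓ) = a
    · simp [h, Finset.card_insert_of_notMem]
    · simp [h]

lemma notMem_Rad_of_flatten_replicate_mem_Fac {z : List A}
    (h : ∀ N, (List.replicate N z).flatten ∈ Fac w) : z ∉ Rad w := by
  rintro ⟨-, hrad⟩
  have hz : z ∈ Fac w := by simpa using h 1
  obtain ⟨N, hN⟩ := hrad {z} fun y hy => by
    rw [Finset.mem_singleton.mp hy]
    exact ⟨hz, List.infix_refl z⟩
  exact hN _ List.length_replicate (fun y hy => by simp [List.eq_of_mem_replicate hy]) (h N)

lemma mem_Rad_of_two_pow_count_le [DecidableEq A] {a : A} {z : List A} (hz : z ∈ Fac w)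
    (ha : a ∈ z) (hsparse : ∀ u ∈ Fac w, 2 ^ u.count a ≤ u.length + 1) : z ∈ Rad w := by
  refine ⟨hz, fun Y hY => ?_⟩
  set M := Y.sup List.length
  obtain ⟨N, hN⟩ := exists_mul_add_one_lt_two_pow M
  refine ⟨N, fun L hL hLY hmem => ?_⟩
  have hcount : N ≤ L.flatten.count a := by
    rw [List.count_flatten]
    simpa [hL] using List.card_nsmul_le_sum (L.map (List.count a)) 1 (by
      simp only [List.mem_map]
      rintro _ ⟨y, hy, rfl⟩
      exact List.one_le_count_iff.mpr ((hY y (hLY y hy)).2.subset ha))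
  have hlength : L.flatten.length ≤ N * M := by
    rw [List.length_flatten]
    simpa [hL] using List.sum_le_card_nsmul (L.map List.length) M (by
      simp only [List.mem_map]
      rintro _ ⟨y, hy, rfl⟩
      exact Finset.le_sup (hLY y hy))
  have := hsparse _ hmem
  have := Nat.pow_le_pow_right two_pos hcount
  omega

end Words

/-- The 1-based position of the `(k+1)`-st letter `y` in `x y x² y x⁴ y ⋯`. -/
def yPosition (k : ℕ) : ℕ := 2 ^ (k + 1) + k

def IsPowerBlockWord (w : ℕ → Fin 2) : Prop :=
  ∀ n, (w n = 1 ↔ ∃ k : ℕ, n + 1 = yPosition k)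

lemma yPosition_strictMono : StrictMono yPosition :=
  strictMono_nat_of_lt_succ fun k => by
    simp only [yPosition, pow_succ]
    have : 1 ≤ 2 ^ k := Nat.one_le_two_pow
    omega

lemma two_pow_add_yPosition_le (a d : ℕ) :
    2 ^ (d + 1) + yPosition a ≤ yPosition (a + d) + 2 := by
  have hP : 2 ≤ 2 ^ (a + 1) := Nat.le_self_pow (by omega) 2
  have hQ : 1 ≤ 2 ^ d := Nat.one_le_two_pow
  have : 2 ^ (a + d + 1) = 2 ^ (a + 1) * 2 ^ d := by rw [← pow_add]; ring_nf
  simp only [yPosition, this, pow_succ 2 d]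
  nlinarith

lemma two_pow_card_le {i ℓ : ℕ} (T : Finset ℕ)
    (hT : ∀ k ∈ T, i < yPosition k ∧ yPosition k ≤ i + ℓ) : 2 ^ T.card ≤ ℓ + 1 := by
  rcases T.eq_empty_or_nonempty with rfl | hne
  · simp
  obtain ⟨d, hd⟩ : ∃ d, T.max' hne = T.min' hne + d :=
    Nat.exists_eq_add_of_le (T.min'_le _ (T.max'_mem hne))
  have hcard : T.card ≤ d + 1 := by
    have := Finset.card_le_card (t := Finset.Icc (T.min' hne) (T.max' hne)) fun k hk =>
      Finset.mem_Icc.mpr ⟨T.min'_le k hk, T.le_max' k hk⟩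
    rw [Nat.card_Icc] at this
    omega
  have hmin := (hT _ (T.min'_mem hne)).1
  have hmax := (hT _ (T.max'_mem hne)).2
  rw [hd] at hmax
  have := two_pow_add_yPosition_le (T.min' hne) d
  have := Nat.pow_le_pow_right two_pos hcard
  omega

lemma count_one_factorAt_le {w : ℕ → Fin 2} (hw : IsPowerBlockWord w) (i ℓ : ℕ) :
    ∃ T : Finset ℕ, (∀ k ∈ T, i < yPosition k ∧ yPosition k ≤ i + ℓ) ∧
      (factorAt w i ℓ).count 1 ≤ T.card := by
  set T := (Finset.range (i + ℓ + 1)).filter fun k => i < yPosition k ∧ yPosition k ≤ i + ℓ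
  refine ⟨T, fun k hk => (Finset.mem_filter.mp hk).2, ?_⟩
  have hsub : (Finset.range ℓ).filter (fun j => w (i + j) = 1) ⊆
      T.image fun k => yPosition k - (i + 1) := by
    intro j hj
    obtain ⟨hjℓ, hj1⟩ := Finset.mem_filter.mp hj
    obtain ⟨k, hk⟩ := (hw _).mp hj1
    have : k < yPosition k := by simp only [yPosition]; have := @Nat.lt_two_pow_self k; omega
    refine Finset.mem_image.mpr ⟨k, Finset.mem_filter.mpr ⟨?_, ?_⟩, ?_⟩
    all_goals simp only [Finset.mem_range] at hjℓ ⊢; omega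
  rw [count_factorAt]
  exact (Finset.card_le_card hsub).trans Finset.card_image_le

lemma two_pow_count_one_le {w : ℕ → Fin 2} (hw : IsPowerBlockWord w)
    {u : List (Fin 2)} (hu : u ∈ Fac w) : 2 ^ u.count 1 ≤ u.length + 1 := by
  obtain ⟨i, hi⟩ := hu
  obtain ⟨T, hT, hcount⟩ := count_one_factorAt_le hw i u.length
  rw [← hi] at hcount
  exact (Nat.pow_le_pow_right two_pos hcount).trans (two_pow_card_le T hT)

lemma replicate_zero_mem_Fac {w : ℕ → Fin 2} (hw : IsPowerBlockWord w)
    (m : ℕ) : List.replicate m 0 ∈ Fac w := by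
  -- this window lies in the block of `2 ^ (m + 1)` letters `x` after the `(m+1)`-st `y`
  refine replicate_mem_Fac (i := yPosition m) fun j hj => ?_
  by_contra hne
  obtain ⟨k, hk⟩ := (hw (yPosition m + j)).mp (by omega)
  have hnext : yPosition m + m < yPosition (m + 1) := by
    simp only [yPosition, pow_succ]
    have := @Nat.lt_two_pow_self m
    omega
  have h₁ := yPosition_strictMono.lt_iff_lt.mp (show yPosition m < yPosition k by omega)
  have h₂ := yPosition_strictMono.lt_iff_lt.mp (show yPosition k < yPosition (m + 1) by omega)
  omega

theorem radical_of_power_block_word (w : ℕ → Fin 2)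
    (hw : ∀ n, (w n = 1 ↔ ∃ k : ℕ, n + 1 = 2 ^ (k + 1) + k)) :
    ∀ z ∈ Fac w, (z ∈ Rad w ↔ (1 : Fin 2) ∈ z) := by
  intro z hz
  refine ⟨fun hrad => ?_, fun h1 =>
    mem_Rad_of_two_pow_count_le hz h1 fun _ => two_pow_count_one_le hw⟩
  by_contra h1
  have hzero : z = List.replicate z.length 0 :=
    List.eq_replicate_iff.mpr ⟨rfl, fun b hb => by
      have : b ≠ 1 := fun h => h1 (h ▸ hb)
      omega⟩
  refine notMem_Rad_of_flatten_replicate_mem_Fac (fun N => ?_) hrad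
  rw [hzero, List.flatten_replicate_replicate]
  exact replicate_zero_mem_Fac hw _
end

section
/- Let w be a right-infinite, recurrent, aperiodic word with Fac(w) of linear complexity, and let u be a factor of w. Then for all sufficiently large n, the number of factors of w of length n that contain u as a factor is at least n + 1 − |u|. -/
/-!
If the occurrences of `u` in `w` have bounded gaps, every long factor of `w` contains `u`, so the
count is the full complexity `p_w(n) ≥ n + 1` (Morse–Hedlund). Otherwise recurrence yields an
occurrence of `u` at some position `i` not followed by another one within the next `n - |u|`
positions. The `n + 1 - |u|` windows of length `n` in which this occurrence sits at offsets
`0, …, n - |u|` are then pairwise distinct: if two of them agreed, the occurrence of `u` in one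
would reappear in the other at an offset where it would start inside that gap.
-/

section

variable {A : Type*}

def OccursAt (u : List A) (w : ℕ → A) (i : ℕ) : Prop :=
  u = factorAt w i u.length

@[simp] lemma getElem_factorAt (w : ℕ → A) (i n k : ℕ) (hk : k < (factorAt w i n).length) :
    (factorAt w i n)[k] = w (i + k) := by
  simp [factorAt]

lemma factorAt_succ (w : ℕ → A) (i n : ℕ) :
    factorAt w i (n + 1) = factorAt w i n ++ [w (i + n)] := by
  simp [factorAt, List.range_succ]

lemma take_factorAt (w : ℕ → A) (i n m : ℕ) :
    (factorAt w i n).take m = factorAt w i (min m n) := by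
  apply List.ext_getElem <;> simp

lemma take_drop_factorAt (w : ℕ → A) (i : ℕ) {n r m : ℕ} (h : r + m ≤ n) :
    ((factorAt w i n).drop r).take m = factorAt w (i + r) m := by
  apply List.ext_getElem
  · simp only [List.length_take, List.length_drop, factorAt_length]
    omega
  · intro k _ _
    simp [Nat.add_assoc]

lemma factorAt_eq_factorAt_iff (w : ℕ → A) (i j n : ℕ) :
    factorAt w i n = factorAt w j n ↔ ∀ t < n, w (i + t) = w (j + t) := by
  rw [List.ext_get_iff]
  simp

lemma factorAt_add_eq_of_eq {w : ℕ → A} {i j n r m : ℕ} (h : factorAt w i n = factorAt w j n)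
    (hrm : r + m ≤ n) : factorAt w (i + r) m = factorAt w (j + r) m := by
  rw [← take_drop_factorAt w i hrm, h, take_drop_factorAt w j hrm]

lemma infix_factorAt_iff (u : List A) (w : ℕ → A) (i n : ℕ) :
    u <:+: factorAt w i n ↔ ∃ r, r + u.length ≤ n ∧ OccursAt u w (i + r) := by
  constructor
  · rintro ⟨s, t, h⟩
    have hlen : s.length + u.length ≤ n := by
      have := congrArg List.length h
      simp only [List.length_append, factorAt_length] at this
      omega
    refine ⟨s.length, hlen, ?_⟩
    rw [OccursAt, ← take_drop_factorAt w i hlen, ← h, List.append_assoc, List.drop_left,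
      List.take_left]
  · rintro ⟨r, hr, hocc⟩
    rw [hocc, ← take_drop_factorAt w i hr]
    exact (List.take_prefix _ _).isInfix.trans (List.drop_suffix _ _).isInfix

lemma finite_setOf_mem_Fac_length [Finite A] (w : ℕ → A) (n : ℕ) :
    {y | y ∈ Fac w ∧ y.length = n}.Finite :=
  (List.finite_length_eq A n).subset fun _ h => h.2

lemma eq_of_factorAt_eq_of_cplx_succ_le [Finite A] {w : ℕ → A} {n : ℕ}
    (hle : cplx w (n + 1) ≤ cplx w n) {i j : ℕ} (h : factorAt w i n = factorAt w j n) :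
    w (i + n) = w (j + n) := by
  -- taking the length-`n` prefix maps factors of length `n + 1` onto those of length `n`,
  -- so when there are not more of the former it is injective
  have hext : factorAt w i (n + 1) = factorAt w j (n + 1) := by
    refine Set.inj_on_of_surj_on_of_ncard_le (fun y _ => y.take n) ?_ ?_ hle
      ⟨factorAt_mem_Fac w i _, factorAt_length w i _⟩
      ⟨factorAt_mem_Fac w j _, factorAt_length w j _⟩ ?_ (finite_setOf_mem_Fac_length w _)
    · rintro y ⟨⟨k, hk⟩, hlen⟩
      rw [hk, take_factorAt]
      exact ⟨factorAt_mem_Fac w k _, by simp [hlen]⟩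
    · rintro y ⟨⟨k, hk⟩, hlen⟩
      refine ⟨factorAt w k (n + 1), ⟨factorAt_mem_Fac w k _, factorAt_length w k _⟩, ?_⟩
      rw [take_factorAt, Nat.min_eq_left (Nat.le_succ n), hk, hlen]
    · simpa only [take_factorAt, Nat.min_eq_left (Nat.le_succ n)] using h
  rw [factorAt_succ, factorAt_succ] at hext
  simpa using List.append_inj_right' hext rfl

lemma eventuallyPeriodicWord_of_factorAt_determines_next [Finite A] {w : ℕ → A} {n : ℕ}
    (hnext : ∀ i j, factorAt w i n = factorAt w j n → w (i + n) = w (j + n)) :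
    EventuallyPeriodicWord w := by
  obtain ⟨i, -, j, -, hij, hfac⟩ := Set.infinite_univ.exists_lt_map_eq_of_mapsTo
    (f := fun k => factorAt w k n) (t := {y | y ∈ Fac w ∧ y.length = n})
    (fun k _ => ⟨factorAt_mem_Fac w k n, factorAt_length w k n⟩)
    (finite_setOf_mem_Fac_length w n)
  have hshift : ∀ k, w (i + k) = w (j + k) := by
    intro k
    induction k using Nat.strong_induction_on with
    | _ k ih =>
      rcases lt_or_ge k n with hk | hk
      · exact (factorAt_eq_factorAt_iff w i j n).1 hfac k hk
      · have hwin : factorAt w (i + (k - n)) n = factorAt w (j + (k - n)) n :=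
          (factorAt_eq_factorAt_iff _ _ _ n).2 fun t ht => by
            simpa only [Nat.add_assoc] using ih (k - n + t) (by omega)
        simpa only [Nat.add_assoc, Nat.sub_add_cancel hk] using hnext _ _ hwin
  refine ⟨j - i, by omega, i, fun m hm => ?_⟩
  convert (hshift (m - i)).symm using 2 <;> omega

lemma cplx_lt_cplx_succ [Finite A] {w : ℕ → A} (hap : ¬ EventuallyPeriodicWord w) (n : ℕ) :
    cplx w n < cplx w (n + 1) := by
  by_contra! hle
  exact hap (eventuallyPeriodicWord_of_factorAt_determines_next fun _ _ =>
    eq_of_factorAt_eq_of_cplx_succ_le hle)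

theorem add_one_le_cplx [Finite A] {w : ℕ → A} (hap : ¬ EventuallyPeriodicWord w) (n : ℕ) :
    n + 1 ≤ cplx w n := by
  induction n with
  | zero => exact (Set.ncard_pos (finite_setOf_mem_Fac_length w 0)).2 ⟨[], ⟨0, rfl⟩, rfl⟩
  | succ n ih => exact ih.trans_lt (cplx_lt_cplx_succ hap n)

lemma infix_of_mem_Fac_of_occursAt_within {u : List A} {w : ℕ → A} {K : ℕ}
    (hK : ∀ g, ∃ t ≤ K, OccursAt u w (g + t)) {y : List A} (hy : y ∈ Fac w)
    (hlen : K + u.length ≤ y.length) : u <:+: y := by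
  obtain ⟨k, hk⟩ := hy
  obtain ⟨t, htK, hocc⟩ := hK k
  rw [hk, infix_factorAt_iff]
  exact ⟨t, by omega, hocc⟩

lemma exists_occursAt_followed_by_gap {u : List A} {w : ℕ → A} (hrec : Recurrent w)
    (hu : u ∈ Fac w) (hgaps : ∀ n, ∃ g, ∀ t ≤ n, ¬ OccursAt u w (g + t)) (n M : ℕ) :
    ∃ i ≥ M, OccursAt u w i ∧ ∀ t, 0 < t → t ≤ n → ¬ OccursAt u w (i + t) := by
  classical
  obtain ⟨i₀, hi₀M, hi₀⟩ := hrec u hu M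
  obtain ⟨g, hg⟩ := hgaps n
  -- the window after `g` in which `u` does not start recurs at some `s ≥ i₀`
  obtain ⟨s, hsi₀, hs⟩ := hrec _ (factorAt_mem_Fac w g (n + u.length)) i₀
  rw [factorAt_length] at hs
  have hfree : ∀ t ≤ n, ¬ OccursAt u w (s + t) := fun t ht hocc =>
    hg t ht (hocc.trans (factorAt_add_eq_of_eq hs (by omega)).symm)
  -- the last occurrence of `u` in `[i₀, s]` is followed by that gap
  set P : ℕ → Prop := fun m => i₀ ≤ m ∧ OccursAt u w m
  have hP : P i₀ := ⟨le_rfl, hi₀⟩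
  set i := Nat.findGreatest P s
  have hi : P i := Nat.findGreatest_spec hsi₀ hP
  have his : i ≤ s := Nat.findGreatest_le s
  refine ⟨i, hi₀M.trans hi.1, hi.2, fun t ht0 htn hocc => ?_⟩
  rcases le_or_gt (i + t) s with h | h
  · exact Nat.findGreatest_is_greatest (P := P) (by omega) h ⟨by omega, hocc⟩
  · exact hfree (i + t - s) (by omega) (by rwa [Nat.add_sub_cancel' h.le])

lemma le_ncard_factors_containing_of_gap [Finite A] {u : List A} {w : ℕ → A} {i n : ℕ}
    (hocc : OccursAt u w i) (hi : n - u.length ≤ i)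
    (hgap : ∀ t, 0 < t → t ≤ n - u.length → ¬ OccursAt u w (i + t)) :
    n + 1 - u.length ≤ Set.ncard {y | y ∈ Fac w ∧ y.length = n ∧ u <:+: y} := by
  have hoccAt : ∀ j ≤ n - u.length, OccursAt u w (i - j + j) := fun j hj => by
    rwa [Nat.sub_add_cancel (by omega)]
  refine Set.le_ncard_of_inj_on_range (fun j => factorAt w (i - j) n)
    (fun j hj => ⟨factorAt_mem_Fac w _ n, factorAt_length w _ n,
      (infix_factorAt_iff u w _ n).2 ⟨j, by omega, hoccAt j (by omega)⟩⟩) ?_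
    ((finite_setOf_mem_Fac_length w n).subset fun _ h => ⟨h.1, h.2.1⟩)
  intro a ha b hb hab
  by_contra hne
  wlog hlt : a < b generalizing a b
  · exact this b hb a ha hab.symm (Ne.symm hne) (by omega)
  have hshift := factorAt_add_eq_of_eq hab (r := b) (m := u.length) (by omega)
  refine hgap (b - a) (by omega) (by omega) ((hoccAt b (by omega)).trans ?_)
  rw [← hshift, show i - a + b = i + (b - a) by omega]

end

theorem count_factors_containing_ge_general {A : Type*} [Finite A] (w : ℕ → A)
    (hrec : Recurrent w) (hap : ¬ EventuallyPeriodicWord w)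
    (u : List A) (hu : u ∈ Fac w) :
    ∃ N : ℕ, ∀ n ≥ N,
      n + 1 - u.length ≤ Set.ncard {y | y ∈ Fac w ∧ y.length = n ∧ u <:+: y} := by
  by_cases hgaps : ∀ n, ∃ g, ∀ t ≤ n, ¬ OccursAt u w (g + t)
  · refine ⟨0, fun n _ => ?_⟩
    obtain ⟨i, hin, hocc, hgap⟩ :=
      exists_occursAt_followed_by_gap hrec hu hgaps (n - u.length) n
    exact le_ncard_factors_containing_of_gap hocc (by omega) hgap
  · push Not at hgaps
    obtain ⟨K, hK⟩ := hgaps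
    refine ⟨K + u.length, fun n hn => ?_⟩
    have hall :
        {y | y ∈ Fac w ∧ y.length = n ∧ u <:+: y} = {y | y ∈ Fac w ∧ y.length = n} :=
      Set.ext fun y => ⟨fun h => ⟨h.1, h.2.1⟩,
        fun h => ⟨h.1, h.2, infix_of_mem_Fac_of_occursAt_within hK h.1 (h.2 ▸ hn)⟩⟩
    rw [hall]
    exact (Nat.sub_le _ _).trans (add_one_le_cplx hap n)

theorem count_factors_containing_ge {A : Type*} [Finite A] (w : ℕ → A)
    (hrec : Recurrent w) (hap : ¬ EventuallyPeriodicWord w)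
    (hlin : ∃ C : ℕ, ∀ n ≥ 1, cplx w n ≤ C * n)
    (u : List A) (hu : u ∈ Fac w) :
    ∃ N : ℕ, ∀ n ≥ N,
      n + 1 - u.length ≤ Set.ncard {y | y ∈ Fac w ∧ y.length = n ∧ u <:+: y} :=
  count_factors_containing_ge_general w hrec hap u hu
end

section
/- Let w be a recurrent right-infinite word with p_w(n) < Cn for all sufficiently large n, where C is a positive integer. Then the number of distinct periodic equivalence classes [u^ω] with Fac(u^ω) ⊆ Fac(w) is at most C. -/
namespace PerSpec
variable {A : Type*}

lemma factorAt_length (w : ℕ → A) (i n : ℕ) : (factorAt w i n).length = n := by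
  simp [factorAt]

lemma mem_Fac {w : ℕ → A} {u : List A} : u ∈ Fac w ↔ ∃ i, u = factorAt w i u.length :=
  Iff.rfl

lemma factorAt_mem_Fac (w : ℕ → A) (i n : ℕ) : factorAt w i n ∈ Fac w :=
  ⟨i, by rw [factorAt_length]⟩

lemma factorAt_append (w : ℕ → A) (i a b : ℕ) :
    factorAt w i (a + b) = factorAt w i a ++ factorAt w (i + a) b := by
  simp only [factorAt, List.range_add, List.map_append, List.map_map]
  congr 1
  apply List.map_congr_left
  intro k _
  simp [Nat.add_assoc]

lemma factorAt_succ (w : ℕ → A) (i n : ℕ) :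
    factorAt w i (n + 1) = factorAt w i n ++ [w (i + n)] := by
  rw [factorAt_append]
  simp [factorAt, List.range_succ]

lemma factorAt_drop_one (w : ℕ → A) (i n : ℕ) :
    (factorAt w i (1 + n)).drop 1 = factorAt w (i + 1) n := by
  rw [factorAt_append]
  simpa [factorAt_length] using List.drop_left (factorAt w i 1) (factorAt w (i + 1) n)


lemma Fac_closed {w : ℕ → A} {y u : List A} (hy : y ∈ Fac w) (hu : u <:+: y) :
    u ∈ Fac w := by
  obtain ⟨s, t, hst⟩ := hu
  obtain ⟨i, hi⟩ := hy
  have hlen : y.length = s.length + (u.length + t.length) := by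
    rw [← hst]; simp [Nat.add_assoc]
  have hy2 : y = factorAt w i s.length ++
      (factorAt w (i + s.length) u.length ++ factorAt w (i + s.length + u.length) t.length) := by
    rw [hi, hlen, factorAt_append, factorAt_append]
  rw [← hst] at hy2
  rw [List.append_assoc] at hy2
  have h1 := (List.append_inj hy2 (by rw [factorAt_length])).2
  have h2 := (List.append_inj h1 (by rw [factorAt_length])).1
  exact ⟨i + s.length, by rw [← h2]⟩

lemma exists_ext {w : ℕ → A} {u : List A} (hu : u ∈ Fac w) :
    ∃ b, u ++ [b] ∈ Fac w := by
  obtain ⟨i, hi⟩ := hu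
  refine ⟨w (i + u.length), ?_⟩
  have : u ++ [w (i + u.length)] = factorAt w i (u.length + 1) := by
    rw [factorAt_succ, ← hi]
  rw [this]; exact factorAt_mem_Fac w i _

lemma periodic_factorAt_shift {v : ℕ → A} {p : ℕ} (hper : ∀ n, v (n + p) = v n)
    (i n : ℕ) : factorAt v (i + p) n = factorAt v i n := by
  unfold factorAt
  apply List.map_congr_left
  intro k _
  have : i + p + k = (i + k) + p := by omega
  rw [this, hper]

lemma periodic_factorAt_mul {v : ℕ → A} {p : ℕ} (hper : ∀ n, v (n + p) = v n)
    (i n k : ℕ) : factorAt v (i + k * p) n = factorAt v i n := by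
  induction k with
  | zero => simp
  | succ k ih =>
    have : i + (k + 1) * p = (i + k * p) + p := by ring
    rw [this, periodic_factorAt_shift hper, ih]

/-- uniform recurrence of periodic words -/
lemma periodic_unif {v : ℕ → A} {p : ℕ} (hp : 1 ≤ p) (hper : ∀ n, v (n + p) = v n)
    {z y : List A} (hz : z ∈ Fac v) (hy : y ∈ Fac v)
    (hlen : z.length + p ≤ y.length) : z <:+: y := by
  obtain ⟨i0, hi0⟩ := hz
  obtain ⟨a, ha⟩ := hy
  set m := z.length with hm
  set n := y.length with hn
  -- z occurs at r + k*p for all k, where r = i0 % p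
  set r := i0 % p with hr
  have hrp : r < p := Nat.mod_lt _ hp
  have hocc : ∀ k, z = factorAt v (r + k * p) m := by
    intro k
    rw [periodic_factorAt_mul hper]
    have h0 : i0 = r + (i0 / p) * p := (Nat.mod_add_div' i0 p).symm
    rw [hi0]
    conv_lhs => rw [h0]
    rw [periodic_factorAt_mul hper]
  obtain ⟨q, s, hs, hqs⟩ : ∃ q s, s < p ∧ p * q + s = a - r :=
    ⟨(a - r) / p, (a - r) % p, Nat.mod_lt _ hp, Nat.div_add_mod _ _⟩
  obtain ⟨k, hk1, hk2⟩ : ∃ k, a ≤ r + k * p ∧ r + k * p < a + p := by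
    rcases Nat.eq_zero_or_pos s with h0 | h0
    · refine ⟨q, ?_, ?_⟩ <;> (have e2 : q * p = p * q := Nat.mul_comm q p) <;> omega
    · refine ⟨q + 1, ?_, ?_⟩ <;> (have e2 : (q + 1) * p = p * q + p := by ring) <;> omega
  set j := r + k * p with hjdef
  set d := j - a with hddef
  set e := n - d - m with hedef
  have hj : z = factorAt v j m := hocc k
  have hd : a + d = j := by omega
  have hn' : n = d + (m + e) := by omega
  have hy2 : y = factorAt v a d ++ (factorAt v j m ++ factorAt v (j + m) e) := by
    rw [ha]
    conv_lhs => rw [hn']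
    rw [factorAt_append, factorAt_append, hd]
  refine ⟨factorAt v a d, factorAt v (j + m) e, ?_⟩
  rw [← hj] at hy2
  rw [List.append_assoc]
  exact hy2.symm


/-- `u` is right-special in `w`. -/
def RS (w : ℕ → A) (u : List A) : Prop :=
  ∃ b c : A, b ≠ c ∧ u ++ [b] ∈ Fac w ∧ u ++ [c] ∈ Fac w

lemma RS.mem_Fac {w : ℕ → A} {u : List A} (h : RS w u) : u ∈ Fac w := by
  obtain ⟨b, c, _, hb, _⟩ := h
  exact Fac_closed hb ((List.prefix_append u [b]).isInfix)

open Classical in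
noncomputable def extL (w : ℕ → A) (u : List A) : A :=
  if h : ∃ b, u ++ [b] ∈ Fac w then h.choose else w 0

lemma extL_spec {w : ℕ → A} {u : List A} (hu : u ∈ Fac w) :
    u ++ [extL w u] ∈ Fac w := by
  have h : ∃ b, u ++ [b] ∈ Fac w := exists_ext hu
  rw [extL, dif_pos h]
  exact h.choose_spec

open Classical in
noncomputable def othL (w : ℕ → A) (u : List A) : A :=
  if h : ∃ b, b ≠ extL w u ∧ u ++ [b] ∈ Fac w then h.choose else w 0

lemma othL_spec {w : ℕ → A} {u : List A} (hu : RS w u) :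
    othL w u ≠ extL w u ∧ u ++ [othL w u] ∈ Fac w := by
  have h : ∃ b, b ≠ extL w u ∧ u ++ [b] ∈ Fac w := by
    obtain ⟨b, c, hbc, hb, hc⟩ := hu
    rcases eq_or_ne b (extL w u) with h1 | h1
    · exact ⟨c, by rw [← h1]; exact hbc.symm, hc⟩
    · exact ⟨b, h1, hb⟩
  rw [othL, dif_pos h]
  exact h.choose_spec

lemma append_singleton_inj {u u' : List A} {x y : A} (hlen : u.length = u'.length)
    (h : u ++ [x] = u' ++ [y]) : u = u' ∧ x = y := by
  obtain ⟨h1, h2⟩ := List.append_inj h hlen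
  exact ⟨h1, by simpa using h2⟩

lemma growth [Finite A] (w : ℕ → A) (n : ℕ) :
    cplx w n + {u : List A | u.length = n ∧ RS w u}.ncard ≤ cplx w (n + 1) := by
  classical
  set Λn := {u : List A | u ∈ Fac w ∧ u.length = n} with hΛn
  set Λn1 := {u : List A | u ∈ Fac w ∧ u.length = n + 1} with hΛn1
  set R := {u : List A | u.length = n ∧ RS w u} with hR
  have hfin1 : Λn1.Finite := (List.finite_length_eq A (n + 1)).subset (fun u hu => hu.2)
  have hfinn : Λn.Finite := (List.finite_length_eq A n).subset (fun u hu => hu.2)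
  have hfinR : R.Finite := (List.finite_length_eq A n).subset (fun u hu => hu.1)
  set E := (fun u => u ++ [extL w u]) '' Λn with hE
  set D := (fun u => u ++ [othL w u]) '' R with hD
  have hEsub : E ⊆ Λn1 := by
    rintro x ⟨u, hu, rfl⟩
    exact ⟨extL_spec hu.1, by simp [hu.2]⟩
  have hDsub : D ⊆ Λn1 := by
    rintro x ⟨u, hu, rfl⟩
    exact ⟨(othL_spec hu.2).2, by simp [hu.1]⟩
  have hEcard : E.ncard = Λn.ncard := by
    apply Set.ncard_image_of_injOn
    intro u hu u' hu' hh
    exact (append_singleton_inj (hu.2.trans hu'.2.symm) hh).1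
  have hDcard : D.ncard = R.ncard := by
    apply Set.ncard_image_of_injOn
    intro u hu u' hu' hh
    exact (append_singleton_inj (hu.1.trans hu'.1.symm) hh).1
  have hdisj : Disjoint E D := by
    rw [Set.disjoint_left]
    rintro x ⟨u, hu, rfl⟩ ⟨u', hu', hx⟩
    obtain ⟨h1, h2⟩ := append_singleton_inj (hu'.1.trans hu.2.symm) hx
    rw [← h1] at h2
    exact (othL_spec hu'.2).1 h2
  have hcup : (E ∪ D).ncard ≤ Λn1.ncard :=
    Set.ncard_le_ncard (Set.union_subset hEsub hDsub) hfin1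
  rw [Set.ncard_union_eq hdisj (hfinn.image _) (hfinR.image _)] at hcup
  rw [hEcard, hDcard] at hcup
  exact hcup


lemma exists_rs_in_class {w v1 v2 : ℕ → A} (hw : Recurrent w)
    (hsub1 : Fac v1 ⊆ Fac w) (hsub2 : Fac v2 ⊆ Fac w) (n : ℕ)
    (hdisj : ∀ u, u ∈ Fac v1 → u ∈ Fac v2 → u.length = n → False) :
    ∃ u, u ∈ Fac v1 ∧ u.length = n ∧ RS w u := by
  by_contra hns
  push_neg at hns
  obtain ⟨a, ha⟩ : ∃ a, factorAt v1 0 n = factorAt w a n := by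
    obtain ⟨i, hi⟩ := hsub1 (factorAt_mem_Fac v1 0 n)
    rw [factorAt_length] at hi
    exact ⟨i, hi⟩
  have claim : ∀ m, factorAt w (a + m) n ∈ Fac v1 := by
    intro m
    induction m with
    | zero => rw [Nat.add_zero, ← ha]; exact factorAt_mem_Fac v1 0 n
    | succ m ih =>
      obtain ⟨c, hc⟩ := ih
      rw [factorAt_length] at hc
      have hext1 : factorAt w (a + m) n ++ [v1 (c + n)] ∈ Fac w := by
        rw [hc, ← factorAt_succ]
        exact hsub1 (factorAt_mem_Fac v1 c (n + 1))
      have hext2 : factorAt w (a + m) n ++ [w (a + m + n)] ∈ Fac w := by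
        rw [← factorAt_succ]
        exact factorAt_mem_Fac w (a + m) (n + 1)
      have ihmem : factorAt w (a + m) n ∈ Fac v1 := ⟨c, by rw [factorAt_length]; exact hc⟩
      have heq : v1 (c + n) = w (a + m + n) := by
        by_contra hne
        exact hns _ ihmem (factorAt_length w (a + m) n) ⟨_, _, hne, hext1, hext2⟩
      have hfull : factorAt w (a + m) (n + 1) = factorAt v1 c (n + 1) := by
        rw [factorAt_succ, factorAt_succ, hc, heq]
      have hstep : factorAt w (a + m + 1) n = factorAt v1 (c + 1) n := by
        rw [show n + 1 = 1 + n from by omega] at hfull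
        rw [← factorAt_drop_one, ← factorAt_drop_one, hfull]
      rw [show a + (m + 1) = a + m + 1 from by omega, hstep]
      exact factorAt_mem_Fac v1 (c + 1) n
  have hz2 : factorAt v2 0 n ∈ Fac w := hsub2 (factorAt_mem_Fac v2 0 n)
  obtain ⟨b, hb, hzb⟩ := hw _ hz2 a
  rw [factorAt_length] at hzb
  have hmem1 : factorAt v2 0 n ∈ Fac v1 := by
    rw [hzb, show b = a + (b - a) from by omega]
    exact claim _
  exact hdisj _ hmem1 (factorAt_mem_Fac v2 0 n) (factorAt_length v2 0 n)

lemma class_disjoint {v1 v2 : ℕ → A} {p1 p2 : ℕ}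
    (hp1 : 1 ≤ p1) (hper1 : ∀ n, v1 (n + p1) = v1 n)
    (hp2 : 1 ≤ p2) (hper2 : ∀ n, v2 (n + p2) = v2 n)
    (hne : Fac v1 ≠ Fac v2) :
    ∃ N, ∀ u : List A, N ≤ u.length → u ∈ Fac v1 → u ∈ Fac v2 → False := by
  have hex : ∃ z, (z ∈ Fac v1 ∧ z ∉ Fac v2) ∨ (z ∈ Fac v2 ∧ z ∉ Fac v1) := by
    by_contra hc
    push_neg at hc
    apply hne
    ext z
    exact ⟨fun hz => (hc z).1 hz, fun hz => (hc z).2 hz⟩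
  obtain ⟨z, hz⟩ := hex
  rcases hz with ⟨h1, h2⟩ | ⟨h1, h2⟩
  · exact ⟨z.length + p1, fun u hu hu1 hu2 =>
      h2 (Fac_closed hu2 (periodic_unif hp1 hper1 h1 hu1 hu))⟩
  · exact ⟨z.length + p2, fun u hu hu1 hu2 =>
      h2 (Fac_closed hu1 (periodic_unif hp2 hper2 h1 hu2 hu))⟩

end PerSpec

open PerSpec

theorem card_periodic_spectrum_le {A : Type*} [Finite A] (w : ℕ → A)
    (hw : Recurrent w) (C : ℕ) (hC : 0 < C)
    (h : ∃ M : ℕ, ∀ n ≥ M, cplx w n < C * n) :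
    Set.ncard {F : Set (List A) |
      (∃ v : ℕ → A, PeriodicWord v ∧ F = Fac v) ∧ F ⊆ Fac w} ≤ C := by
  classical
  by_contra hlt
  push_neg at hlt
  set S := {F : Set (List A) |
      (∃ v : ℕ → A, PeriodicWord v ∧ F = Fac v) ∧ F ⊆ Fac w} with hS
  have hSfin : S.Finite := by
    by_contra hf
    rw [Set.Infinite.ncard hf] at hlt
    omega
  obtain ⟨t, htS, htcard⟩ := Set.exists_subset_card_eq (show C + 1 ≤ S.ncard from hlt)
  have htfin : t.Finite := hSfin.subset htS
  have hftcard : htfin.toFinset.card = C + 1 := by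
    rw [← Set.ncard_eq_toFinset_card t htfin]
    exact htcard
  set e := (Fintype.equivFinOfCardEq ((Fintype.card_coe htfin.toFinset).trans hftcard) :
    htfin.toFinset ≃ Fin (C + 1)) with he
  set f : Fin (C + 1) → Set (List A) := fun i => ((e.symm i : htfin.toFinset) : Set (List A)) with hf
  have hfinj : Function.Injective f := by
    intro i j hij
    have := Subtype.coe_injective hij
    exact e.symm.injective this
  have hfS : ∀ i, f i ∈ S := by
    intro i
    have : ((e.symm i : htfin.toFinset) : Set (List A)) ∈ htfin.toFinset := (e.symm i).2
    rw [Set.Finite.mem_toFinset] at this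
    exact htS this
  have hprop : ∀ i, ∃ v : ℕ → A, PeriodicWord v ∧ f i = Fac v ∧ Fac v ⊆ Fac w := by
    intro i
    obtain ⟨⟨v, hvper, hveq⟩, hsub⟩ := hfS i
    exact ⟨v, hvper, hveq, hveq ▸ hsub⟩
  choose V hVper hVeq hVsub using hprop
  choose P hP1 hP2 using hVper
  have hfne : ∀ i j : Fin (C + 1), i ≠ j → Fac (V i) ≠ Fac (V j) := by
    intro i j hij hcon
    exact hij (hfinj (by rw [hVeq i, hVeq j, hcon]))
  have hdis0 : ∀ i j : Fin (C + 1), ∃ N, i ≠ j →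
      ∀ u : List A, N ≤ u.length → u ∈ Fac (V i) → u ∈ Fac (V j) → False := by
    intro i j
    by_cases hij : i = j
    · exact ⟨0, fun hc => absurd hij hc⟩
    · obtain ⟨N, hN⟩ := class_disjoint (hP1 i) (hP2 i) (hP1 j) (hP2 j) (hfne i j hij)
      exact ⟨N, fun _ => hN⟩
  choose g hg using hdis0
  set N0 := Finset.univ.sup (fun ij : Fin (C + 1) × Fin (C + 1) => g ij.1 ij.2) with hN0def
  have hN0 : ∀ i j : Fin (C + 1), i ≠ j →
      ∀ u : List A, N0 ≤ u.length → u ∈ Fac (V i) → u ∈ Fac (V j) → False := by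
    intro i j hij u hu
    refine hg i j hij u (le_trans ?_ hu)
    exact Finset.le_sup (f := fun ij : Fin (C + 1) × Fin (C + 1) => g ij.1 ij.2)
      (Finset.mem_univ (i, j))
  have hRS : ∀ n, N0 ≤ n → C + 1 ≤ {u : List A | u.length = n ∧ RS w u}.ncard := by
    intro n hn
    have hUex : ∀ i : Fin (C + 1), ∃ u, u ∈ Fac (V i) ∧ u.length = n ∧ RS w u := by
      intro i
      have h2 : 2 ≤ C + 1 := by omega
      set j : Fin (C + 1) := if i = (⟨0, by omega⟩ : Fin (C + 1)) then ⟨1, by omega⟩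
        else ⟨0, by omega⟩ with hj
      have hij : i ≠ j := by
        by_cases hc : i = (⟨0, by omega⟩ : Fin (C + 1))
        · rw [hj, if_pos hc, hc]
          intro hh
          exact absurd (congrArg Fin.val hh) (by simp)
        · rw [hj, if_neg hc]
          exact hc
      exact exists_rs_in_class hw (hVsub i) (hVsub j) n
        (fun u hu1 hu2 hlen => hN0 i j hij u (by rw [hlen]; exact hn) hu1 hu2)
    choose U hU1 hU2 hU3 using hUex
    have hUinj : Function.Injective U := by
      intro i j hij
      by_contra hne
      exact hN0 i j hne (U i) (by rw [hU2 i]; exact hn) (hU1 i) (by rw [hij]; exact hU1 j)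
    have hsub : Set.range U ⊆ {u : List A | u.length = n ∧ RS w u} := by
      rintro x ⟨i, rfl⟩
      exact ⟨hU2 i, hU3 i⟩
    have hfin : {u : List A | u.length = n ∧ RS w u}.Finite :=
      (List.finite_length_eq A n).subset fun u hu => hu.1
    have hcard : (Set.range U).ncard = C + 1 := by
      rw [← Set.image_univ, Set.ncard_image_of_injOn hUinj.injOn, Set.ncard_univ,
        Nat.card_eq_fintype_card, Fintype.card_fin]
    calc C + 1 = (Set.range U).ncard := hcard.symm
      _ ≤ _ := Set.ncard_le_ncard hsub hfin
  have acc : ∀ k, (C + 1) * k ≤ cplx w (N0 + k) := by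
    intro k
    induction k with
    | zero => simp
    | succ k ih =>
      have h1 := growth w (N0 + k)
      have h2 := hRS (N0 + k) (by omega)
      have h3 : (C + 1) * (k + 1) = (C + 1) * k + (C + 1) := by ring
      have h4 : N0 + (k + 1) = (N0 + k) + 1 := by omega
      rw [h4]
      omega
  obtain ⟨M, hM⟩ := h
  set k := C * N0 + M + 1 with hk
  have h1 := acc k
  have h2 := hM (N0 + k) (by omega)
  have e1 : (C + 1) * k = C * k + k := by ring
  have e2 : C * (N0 + k) = C * N0 + C * k := by ring
  omega
end
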